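/- arXiv:1111.6555 — 2 statements merged into one kernel-verified Lean document; each statement's English description precedes it below -/
import Mathlib

section
/- Let F be a finite-dimensional real vector space, let C ⊆ F be an acute closed convex cone, let L ⊆ F be a linear subspace of codimension 1, and let φ : L → ℝ be a linear functional such that φ(l) > 0 for every l ∈ L ∩ C with l ≠ 0. Then there exists a linear functional Φ : F → ℝ extending φ such that Φ(x) > 0 for every x ∈ C with x ≠ 0. -/
/-!
Fix `π` with kernel `L` and any linear extension `f` of `φ`, and look for `Φ = f + t • π`.
On the compact halves `K± = C ∩ S ∩ {±π ≥ 0}` of the unit sphere `S`, the sets of admissible `t`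
are open and nonempty. Every `t` is admissible for `K+` or for `K-`: otherwise, for witnesses
`y ∈ K+` and `z ∈ K-`, the vector `(-π z) • y + (π y) • z` lies in `C ∩ L` and `f + t • π` is
nonpositive there, so it vanishes and acuteness forces `y = 0`. As `ℝ` is connected, the two
open sets meet.
-/

open Set Metric

theorem Submodule.exists_ker_eq_of_finrank_quotient_eq_one {K V : Type*} [Field K]
    [AddCommGroup V] [Module K V] {L : Submodule K V} (hL : Module.finrank K (V ⧸ L) = 1) :
    ∃ π : V →ₗ[K] K, LinearMap.ker π = L := by
  have : Module.Finite K (V ⧸ L) := Module.finite_of_finrank_pos (by omega)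
  let ψ : (V ⧸ L) ≃ₗ[K] K := .ofFinrankEq _ _ (by simp [hL])
  refine ⟨ψ.toLinearMap ∘ₗ L.mkQ, ?_⟩
  rw [LinearMap.ker_comp, LinearEquiv.ker, Submodule.comap_bot, Submodule.ker_mkQ]

theorem IsCompact.isOpen_setOf_forall_pos_add_mul {X : Type*} [TopologicalSpace X] {K : Set X}
    (hK : IsCompact K) {f g : X → ℝ} (hf : Continuous f) (hg : Continuous g) :
    IsOpen {t : ℝ | ∀ x ∈ K, 0 < f x + t * g x} := by
  refine isOpen_iff_eventually.2 fun t ht => hK.eventually_forall_of_forall_eventually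
    fun x hx => ?_
  have hcont : Continuous fun p : ℝ × X => f p.2 + p.1 * g p.2 := by fun_prop
  exact hcont.continuousAt.eventually (eventually_gt_nhds (ht x hx))

theorem IsCompact.exists_forall_pos_add_mul {X : Type*} [TopologicalSpace X] {K : Set X}
    (hK : IsCompact K) {f g : X → ℝ} (hf : Continuous f) (hg : Continuous g)
    (hg_nonneg : ∀ x ∈ K, 0 ≤ g x) (hf_pos : ∀ x ∈ K, g x = 0 → 0 < f x) :
    ∃ t : ℝ, ∀ x ∈ K, 0 < f x + t * g x := by
  -- The disjunct `g x < 0`, void on `K`, makes the cover monotone in `n`.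
  let U : ℕ → Set X := fun n => {x | 0 < f x + n * g x ∨ g x < 0}
  have hU_open : ∀ n, IsOpen (U n) := fun n =>
    (isOpen_lt continuous_const (by fun_prop) : IsOpen {x | 0 < f x + n * g x}).union
      (isOpen_lt hg continuous_const)
  have hU_mono : Monotone U := by
    intro m n hmn x hx
    rcases lt_or_ge (g x) 0 with hgx | hgx
    · exact Or.inr hgx
    · refine Or.inl (hx.resolve_right hgx.not_gt |>.trans_le ?_)
      gcongr
  have hKU : K ⊆ ⋃ n, U n := by
    intro x hx
    rcases (hg_nonneg x hx).eq_or_lt with hgx | hgx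
    · exact mem_iUnion.2 ⟨0, Or.inl (by simpa [← hgx] using hf_pos x hx hgx.symm)⟩
    · obtain ⟨n, hn⟩ := exists_nat_gt (-f x / g x)
      refine mem_iUnion.2 ⟨n, Or.inl ?_⟩
      rw [div_lt_iff₀ hgx] at hn
      linarith
  obtain ⟨n, hn⟩ := hK.elim_directed_cover U hU_open hKU hU_mono.directed_le
  exact ⟨n, fun x hx => (hn hx).resolve_right (hg_nonneg x hx).not_gt⟩

section Cone

variable {F : Type*} [NormedAddCommGroup F] [NormedSpace ℝ F] {C : Set F}

theorem pos_or_pos_of_nonneg_of_nonpos (hC_add : ∀ x ∈ C, ∀ y ∈ C, x + y ∈ C)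
    (hC_smul : ∀ c : ℝ, 0 ≤ c → ∀ x ∈ C, c • x ∈ C) (hC_acute : C ∩ -C = {0})
    {f π : F →ₗ[ℝ] ℝ} (hf : ∀ x ∈ C, π x = 0 → x ≠ 0 → 0 < f x) (t : ℝ)
    {y z : F} (hy : y ∈ C) (hy0 : y ≠ 0) (hπy : 0 ≤ π y)
    (hz : z ∈ C) (hz0 : z ≠ 0) (hπz : π z ≤ 0) :
    0 < f y + t * π y ∨ 0 < f z + t * π z := by
  by_contra! ⟨hgy, hgz⟩
  have hπy : 0 < π y := hπy.lt_of_ne fun h0 => by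
    rw [← h0, mul_zero] at hgy; linarith [hf y hy h0.symm hy0]
  have hπz : π z < 0 := hπz.lt_of_ne fun h0 => by
    rw [h0, mul_zero] at hgz; linarith [hf z hz h0 hz0]
  set w := (-π z) • y + π y • z with hw
  have hwC : w ∈ C := hC_add _ (hC_smul _ (by linarith) y hy) _ (hC_smul _ hπy.le z hz)
  have hπw : π w = 0 := by simp only [hw, map_add, map_smul, smul_eq_mul]; ring
  have hw0 : w = 0 := by
    by_contra hw0
    have hfw := hf w hwC hπw hw0
    simp only [hw, map_add, map_smul, smul_eq_mul] at hfw
    nlinarith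
  have hyz : (-π z) • y ∈ C ∩ -C :=
    ⟨hC_smul _ (by linarith) y hy, by
      rw [mem_neg, eq_neg_of_add_eq_zero_left hw0, neg_neg]; exact hC_smul _ hπy.le z hz⟩
  rw [hC_acute, mem_singleton_iff, smul_eq_zero] at hyz
  exact hyz.elim (fun h0 => hπz.ne (by linarith)) hy0

theorem pos_of_pos_on_sphere (hC_smul : ∀ c : ℝ, 0 ≤ c → ∀ x ∈ C, c • x ∈ C)
    {g : F →ₗ[ℝ] ℝ} (hg : ∀ x ∈ C ∩ sphere 0 1, 0 < g x) {x : F} (hx : x ∈ C) (hx0 : x ≠ 0) :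
    0 < g x := by
  have hnorm : 0 < ‖x‖ := norm_pos_iff.2 hx0
  have hu := hg (‖x‖⁻¹ • x) ⟨hC_smul _ (by positivity) x hx, by
    simp [norm_smul, hnorm.ne']⟩
  rw [map_smul, smul_eq_mul] at hu
  exact pos_of_mul_pos_right hu (by positivity)

variable [FiniteDimensional ℝ F]

theorem exists_forall_pos_add_mul_of_pos_on_ker (hC_closed : IsClosed C)
    (hC_add : ∀ x ∈ C, ∀ y ∈ C, x + y ∈ C) (hC_smul : ∀ c : ℝ, 0 ≤ c → ∀ x ∈ C, c • x ∈ C)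
    (hC_acute : C ∩ -C = {0}) {f π : F →ₗ[ℝ] ℝ} (hf : ∀ x ∈ C, π x = 0 → x ≠ 0 → 0 < f x) :
    ∃ t : ℝ, ∀ x ∈ C, x ≠ 0 → 0 < f x + t * π x := by
  let hemisphere : (F →ₗ[ℝ] ℝ) → Set F := fun σ => C ∩ sphere 0 1 ∩ {x | 0 ≤ σ x}
  let adm : Set F → Set ℝ := fun S => {t | ∀ x ∈ S, 0 < f x + t * π x}
  have hne0 : ∀ {σ x}, x ∈ hemisphere σ → x ≠ 0 := fun hx h0 => by simpa [h0] using hx.1.2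
  have hcompact : ∀ σ, IsCompact (hemisphere σ) := fun σ =>
    ((isCompact_sphere 0 1).inter_left hC_closed).inter_right
      (isClosed_le continuous_const σ.continuous_of_finiteDimensional)
  have hopen : ∀ σ, IsOpen (adm (hemisphere σ)) := fun σ =>
    (hcompact σ).isOpen_setOf_forall_pos_add_mul f.continuous_of_finiteDimensional
      π.continuous_of_finiteDimensional
  have hadm_pos : (adm (hemisphere π)).Nonempty :=
    (hcompact π).exists_forall_pos_add_mul f.continuous_of_finiteDimensional
      π.continuous_of_finiteDimensional (fun x hx => hx.2)
      (fun x hx hπx => hf x hx.1.1 hπx (hne0 hx))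
  have hadm_neg : (adm (hemisphere (-π))).Nonempty := by
    obtain ⟨t, ht⟩ := (hcompact (-π)).exists_forall_pos_add_mul (g := fun x => -π x)
      f.continuous_of_finiteDimensional π.continuous_of_finiteDimensional.neg
      (fun x hx => hx.2) (fun x hx hπx => hf x hx.1.1 (neg_eq_zero.1 hπx) (hne0 hx))
    exact ⟨-t, fun x hx => by simpa using ht x hx⟩
  have hcover : adm (hemisphere π) ∪ adm (hemisphere (-π)) = univ := by
    refine eq_univ_of_forall fun t => or_iff_not_imp_left.2 fun ht z hz => ?_
    obtain ⟨y, hy, hy'⟩ : ∃ y ∈ hemisphere π, f y + t * π y ≤ 0 := by simpa [adm] using ht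
    have hπz : π z ≤ 0 := by simpa using hz.2
    exact (pos_or_pos_of_nonneg_of_nonpos hC_add hC_smul hC_acute hf t hy.1.1 (hne0 hy) hy.2
      hz.1.1 (hne0 hz) hπz).resolve_left hy'.not_gt
  obtain ⟨t, ht_pos, ht_neg⟩ := nonempty_inter (hopen π) (hopen (-π)) hcover hadm_pos hadm_neg
  refine ⟨t, fun x hx hx0 => ?_⟩
  have hsphere : ∀ u ∈ C ∩ sphere 0 1, 0 < (f + t • π) u := fun u hu => by
    rcases le_total 0 (π u) with hπu | hπu
    · simpa using ht_pos u ⟨hu, hπu⟩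
    · simpa using ht_neg u ⟨hu, by simpa using hπu⟩
  simpa using pos_of_pos_on_sphere hC_smul hsphere hx hx0

end Cone

/-- Let `F` be a finite-dimensional real vector space, `C ⊆ F` an acute
closed convex cone, `L ⊆ F` a linear subspace of codimension 1, and `φ : L → ℝ` a linear
functional such that `φ l > 0` for every `l ∈ L ∩ C` with `l ≠ 0`. Then there is a linear
extension `Φ : F → ℝ` of `φ` with `Φ x > 0` for every `x ∈ C` with `x ≠ 0`.
A convex cone `C` is acute if `C ∩ (-C) = {0}`. -/
theorem stmt_0 {F : Type*} [NormedAddCommGroup F] [NormedSpace ℝ F]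
    [FiniteDimensional ℝ F]
    (C : Set F) (hC_closed : IsClosed C)
    (hC_add : ∀ x ∈ C, ∀ y ∈ C, x + y ∈ C)
    (hC_smul : ∀ (c : ℝ), 0 ≤ c → ∀ x ∈ C, c • x ∈ C)
    (hC_acute : C ∩ (-C) = {0})
    (L : Submodule ℝ F) (hL : Module.finrank ℝ (F ⧸ L) = 1)
    (φ : L →ₗ[ℝ] ℝ)
    (hφ : ∀ l : L, (l : F) ∈ C → (l : F) ≠ 0 → 0 < φ l) :
    ∃ Φ : F →ₗ[ℝ] ℝ, (∀ l : L, Φ l = φ l) ∧ ∀ x ∈ C, x ≠ 0 → 0 < Φ x := by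
  obtain ⟨π, hπ⟩ := L.exists_ker_eq_of_finrank_quotient_eq_one hL
  obtain ⟨f, hf⟩ := LinearMap.exists_extend φ
  have hf_pos : ∀ x ∈ C, π x = 0 → x ≠ 0 → 0 < f x := fun x hx hπx hx0 => by
    have hxL : x ∈ L := hπ ▸ LinearMap.mem_ker.2 hπx
    simpa [← hf] using hφ ⟨x, hxL⟩ hx hx0
  obtain ⟨t, ht⟩ :=
    exists_forall_pos_add_mul_of_pos_on_ker hC_closed hC_add hC_smul hC_acute hf_pos
  refine ⟨f + t • π, fun l => ?_, fun x hx hx0 => by simpa using ht x hx hx0⟩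
  have hπl : π l = 0 := LinearMap.mem_ker.1 (hπ ▸ l.2)
  simp [← hf, hπl]
end

section
/- Let T ⊆ ℝⁿ be a closed set with 0 < Lebesgue measure of T* < ∞ for a bounded measurable subset T* ⊆ T, let μ be a measure on T with a.e. positive locally integrable density with respect to Lebesgue measure, and let I ⊆ ℤ₊ⁿ be a finite nonempty set of multi-indices with N = card I. Then the linear map A : L^∞(T*) → ℝ^N defined by A(u) = (∫_{T*} u(t) t^i dμ(t))_{i∈I} is surjective. -/
/-!
The Gram matrix `Gᵢⱼ = ∫_{T*} tⁱ tʲ dμ` is positive definite: `c ⬝ G c = ∫_{T*} (∑ cᵢ tⁱ)² dμ`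
vanishes only if the polynomial `∑ cᵢ tⁱ` vanishes `μ`-a.e. on `T*`, hence (the density being
a.e. positive) Lebesgue-a.e. on a set of positive measure, and a nonzero polynomial has a null
zero set. So `G` is invertible, and `u = ∑ⱼ (G⁻¹ y)ⱼ tʲ`, a bounded function on the bounded set
`T*`, satisfies `A u = y`.
-/

open MeasureTheory

/-- The monomial function `t ^ i = t₁^{i₁} ⋯ tₙ^{iₙ}` on `ℝⁿ`. -/
noncomputable def mono (n : ℕ) (i : Fin n → ℕ) (t : EuclideanSpace ℝ (Fin n)) : ℝ :=
  ∏ k, t k ^ i k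

theorem continuous_mono (n : ℕ) (i : Fin n → ℕ) : Continuous (mono n i) := by
  unfold mono; fun_prop

section Polynomial

open MvPolynomial

theorem MvPolynomial.ae_eval_ne_zero {n : ℕ} {p : MvPolynomial (Fin n) ℝ} (hp : p ≠ 0) :
    ∀ᵐ x : Fin n → ℝ, eval x p ≠ 0 := by
  induction n with
  | zero =>
    obtain ⟨c, rfl⟩ := C_surjective (Fin 0) p
    exact .of_forall fun x => by simpa using hp
  | succ n ih =>
    set q := finSuccEquiv ℝ n p
    have hq : q ≠ 0 := (map_ne_zero_iff _ (finSuccEquiv ℝ n).injective).2 hp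
    -- for a.e. `s` the leading coefficient of `p` in `x₀` is nonzero at `s`, so `p (·, s)` is a
    -- nonzero polynomial in one variable and has finitely many roots
    have fibers : ∀ᵐ s : Fin n → ℝ, ∀ᵐ y : ℝ, eval (Fin.cons y s) p ≠ 0 := by
      filter_upwards [ih (Polynomial.leadingCoeff_ne_zero.2 hq)] with s hs
      have hqs : q.map (eval s) ≠ 0 := fun h => hs <| by
        simpa [Polynomial.coeff_map] using congrArg (Polynomial.coeff · q.natDegree) h
      filter_upwards [(Polynomial.finite_setOfPred_isRoot hqs).countable.ae_notMem volume]
        with y hy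
      rwa [eval_eq_eval_mv_eval']
    have hmeas : MeasurableSet {z : ℝ × (Fin n → ℝ) | eval (Fin.cons z.1 z.2) p ≠ 0} :=
      (isOpen_ne_fun ((continuous_eval p).comp (continuous_fst.finCons continuous_snd))
        continuous_const).measurableSet
    have hprod : ∀ᵐ z : ℝ × (Fin n → ℝ), eval (Fin.cons z.1 z.2) p ≠ 0 :=
      (Measure.ae_prod_iff_ae_ae hmeas).2 ((Measure.ae_ae_comm hmeas).2 fibers)
    have := (measurePreserving_piFinSuccAbove (fun _ => (volume : Measure ℝ)) 0)
      |>.quasiMeasurePreserving.ae hprod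
    simpa [MeasurableEquiv.piFinSuccAbove_apply, Fin.removeNth_zero, ← volume_pi] using this

noncomputable def polyOfCoeffs {n : ℕ} {I : Finset (Fin n → ℕ)} (c : I → ℝ) :
    MvPolynomial (Fin n) ℝ :=
  ∑ i : I, monomial (Finsupp.equivFunOnFinite.symm i.1) (c i)

theorem eval_polyOfCoeffs {n : ℕ} {I : Finset (Fin n → ℕ)} (c : I → ℝ)
    (t : EuclideanSpace ℝ (Fin n)) :
    eval t.ofLp (polyOfCoeffs c) = ∑ i : I, c i * mono n i t := by
  simp [polyOfCoeffs, eval_monomial, mono, Finsupp.prod_pow]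

theorem coeff_polyOfCoeffs {n : ℕ} {I : Finset (Fin n → ℕ)} (c : I → ℝ) (j : I) :
    coeff (Finsupp.equivFunOnFinite.symm j.1) (polyOfCoeffs c) = c j := by
  classical
  rw [polyOfCoeffs, coeff_sum, Finset.sum_eq_single_of_mem j (Finset.mem_univ j)]
  · rw [coeff_monomial, if_pos rfl]
  · intro i _ hij
    rw [coeff_monomial, if_neg]
    exact fun h => hij (Subtype.ext (Finsupp.equivFunOnFinite.symm.injective h))

theorem eq_zero_of_ae_sum_mul_mono_eq_zero {n : ℕ} {I : Finset (Fin n → ℕ)}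
    {S : Set (EuclideanSpace ℝ (Fin n))} (hS : volume S ≠ 0) (c : I → ℝ)
    (h : ∀ᵐ t ∂volume.restrict S, ∑ i : I, c i * mono n i t = 0) : c = 0 := by
  suffices hP : polyOfCoeffs c = 0 by
    funext j
    simpa [hP] using (coeff_polyOfCoeffs c j).symm
  by_contra hP
  have hne : ∀ᵐ t : EuclideanSpace ℝ (Fin n), ∑ i : I, c i * mono n i t ≠ 0 := by
    filter_upwards [(PiLp.volume_preserving_ofLp (Fin n)).quasiMeasurePreserving.ae
      (ae_eval_ne_zero hP)] with t ht
    rwa [eval_polyOfCoeffs] at ht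
  have : ∀ᵐ t ∂volume.restrict S, False := by
    filter_upwards [h, ae_restrict_of_ae hne] with t h0 hne0 using hne0 h0
  exact hS (by simpa using this)

end Polynomial

section Gram

variable {α ι : Type*} [MeasurableSpace α] {ν : Measure α} [Fintype ι] {f : ι → α → ℝ}

theorem integral_sum_mul_mul (c : ι → ℝ) {g : α → ℝ}
    (h : ∀ j, Integrable (fun x => f j x * g x) ν) :
    ∫ x, (∑ j, c j * f j x) * g x ∂ν = ∑ j, c j * ∫ x, f j x * g x ∂ν := by
  simp_rw [Finset.sum_mul, mul_assoc]
  rw [integral_finsetSum _ fun j _ => (h j).const_mul (c j)]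
  simp_rw [integral_const_mul]

theorem surjective_integral_mul_of_ae_linearIndependent [IsFiniteMeasure ν]
    (hf : ∀ i, MemLp (f i) ⊤ ν)
    (hind : ∀ c : ι → ℝ, (∀ᵐ x ∂ν, ∑ i, c i * f i x = 0) → c = 0) :
    Function.Surjective
      (fun u : {u : α → ℝ // MemLp u ⊤ ν} => fun i => ∫ x, u.1 x * f i x ∂ν) := by
  have hsum : ∀ c : ι → ℝ, MemLp (fun x => ∑ j, c j * f j x) ⊤ ν := fun c =>
    memLp_finsetSum _ fun j _ => (hf j).const_mul (c j)
  have hint : ∀ {g h : α → ℝ}, MemLp g ⊤ ν → MemLp h ⊤ ν → Integrable (fun x => g x * h x) ν :=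
    fun hg hh => (hh.mul' hg).integrable le_top
  let G : Matrix ι ι ℝ := fun i j => ∫ x, f j x * f i x ∂ν
  have hG : ∀ c i, G.mulVec c i = ∫ x, (∑ j, c j * f j x) * f i x ∂ν := fun c i => by
    rw [integral_sum_mul_mul c fun j => hint (hf j) (hf i)]
    exact Finset.sum_congr rfl fun j _ => mul_comm _ _
  have hinj : Function.Injective G.mulVecLin := by
    refine (injective_iff_map_eq_zero _).2 fun c hc => hind c ?_
    have hsq : ∫ x, (∑ j, c j * f j x) * (∑ j, c j * f j x) ∂ν = 0 := calc
      _ = ∑ j, c j * ∫ x, f j x * (∑ k, c k * f k x) ∂ν :=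
        integral_sum_mul_mul c fun j => hint (hf j) (hsum c)
      _ = ∑ j, c j * G.mulVec c j := by simp_rw [hG, mul_comm (f _ _)]
      _ = 0 := by simp [← Matrix.mulVecLin_apply, hc]
    filter_upwards [(integral_eq_zero_iff_of_nonneg (fun x => mul_self_nonneg _)
      (hint (hsum c) (hsum c))).1 hsq] with x hx
    exact mul_self_eq_zero.1 hx
  intro y
  obtain ⟨c, hc⟩ := LinearMap.injective_iff_surjective.1 hinj y
  refine ⟨⟨_, hsum c⟩, funext fun i => ?_⟩
  rw [← hc, Matrix.mulVecLin_apply, hG]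

end Gram

theorem Continuous.memLp_top_restrict_of_isBounded {X : Type*} [PseudoMetricSpace X]
    [ProperSpace X] [MeasurableSpace X] [OpensMeasurableSpace X] {μ : Measure X} {f : X → ℝ}
    (hf : Continuous f) {s : Set X} (hs : Bornology.IsBounded s) (hsm : MeasurableSet s) :
    MemLp f ⊤ (μ.restrict s) := by
  obtain ⟨C, hC⟩ := hs.isCompact_closure.exists_bound_of_continuousOn hf.continuousOn
  exact memLp_top_of_bound hf.aestronglyMeasurable C
    (ae_restrict_of_forall_mem hsm fun x hx => hC x (subset_closure hx))

theorem stmt_4_general (n : ℕ) (T Tstar : Set (EuclideanSpace ℝ (Fin n))) (hT : IsClosed T)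
    (hsub : Tstar ⊆ T) (hTmeas : MeasurableSet Tstar)
    (hTbdd : Bornology.IsBounded Tstar)
    (hTpos : 0 < volume Tstar)
    (ρ : EuclideanSpace ℝ (Fin n) → ℝ)
    (hρpos : ∀ᵐ t ∂(volume.restrict T), 0 < ρ t)
    (hρloc : LocallyIntegrableOn ρ T volume)
    (μ : Measure (EuclideanSpace ℝ (Fin n)))
    (hμ : μ = (volume.restrict T).withDensity (fun t => ENNReal.ofReal (ρ t)))
    (I : Finset (Fin n → ℕ)) :
    Function.Surjective
      (fun u : {u : EuclideanSpace ℝ (Fin n) → ℝ // MemLp u ⊤ (μ.restrict Tstar)} =>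
        fun i : I => ∫ t in Tstar, u.1 t * mono n i t ∂μ) := by
  have hμTstar : μ.restrict Tstar =
      (volume.restrict Tstar).withDensity fun t => ENNReal.ofReal (ρ t) := by
    rw [hμ, restrict_withDensity hTmeas, Measure.restrict_restrict_of_subset hsub]
  have hρint : IntegrableOn ρ Tstar :=
    (hρloc.integrableOn_compact_subset (hT.closure_subset_iff.2 hsub)
      hTbdd.isCompact_closure).mono_set subset_closure
  have : IsFiniteMeasure (μ.restrict Tstar) :=
    hμTstar ▸ isFiniteMeasure_withDensity_ofReal hρint.2
  have hac : volume.restrict Tstar ≪ μ.restrict Tstar :=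
    hμTstar ▸ withDensity_absolutelyContinuous' hρint.1.aemeasurable.ennreal_ofReal
      ((ae_restrict_of_ae_restrict_of_subset hsub hρpos).mono fun t ht => by simpa using ht)
  exact surjective_integral_mul_of_ae_linearIndependent
    (fun i => (continuous_mono n i).memLp_top_restrict_of_isBounded hTbdd hTmeas)
    (fun c hc => eq_zero_of_ae_sum_mul_mono_eq_zero hTpos.ne' c (hac.ae_le hc))

/-- Let `T ⊆ ℝⁿ` be closed, `T* ⊆ T` a bounded measurable subset of finite
positive Lebesgue measure, `μ` the measure on `T` with a.e. positive locally integrable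
density with respect to Lebesgue measure, and `I` a finite nonempty set of multi-indices.
Then the linear map `A : L^∞(T*) → ℝ^I`, `A u = (∫_{T*} u(t) t^i dμ)_{i ∈ I}`, is
surjective. -/
theorem stmt_4 (n : ℕ) (T Tstar : Set (EuclideanSpace ℝ (Fin n))) (hT : IsClosed T)
    (hsub : Tstar ⊆ T) (hTmeas : MeasurableSet Tstar)
    (hTbdd : Bornology.IsBounded Tstar)
    (hTpos : 0 < volume Tstar) (hTfin : volume Tstar < ⊤)
    (ρ : EuclideanSpace ℝ (Fin n) → ℝ)
    (hρpos : ∀ᵐ t ∂(volume.restrict T), 0 < ρ t)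
    (hρloc : LocallyIntegrableOn ρ T volume)
    (μ : Measure (EuclideanSpace ℝ (Fin n)))
    (hμ : μ = (volume.restrict T).withDensity (fun t => ENNReal.ofReal (ρ t)))
    (I : Finset (Fin n → ℕ)) (hI : I.Nonempty) :
    Function.Surjective
      (fun u : {u : EuclideanSpace ℝ (Fin n) → ℝ // MemLp u ⊤ (μ.restrict Tstar)} =>
        fun i : I => ∫ t in Tstar, u.1 t * mono n i t ∂μ) :=
  stmt_4_general n T Tstar hT hsub hTmeas hTbdd hTpos ρ hρpos hρloc μ hμ I
end
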